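/- Let J be a 3×3 real matrix all of whose complex eigenvalues have negative real part, let d₁, d₂, d₃ > 0 be reals, and for y ≥ 0 set J(y) = J − y·diag(d₁, d₂, d₃). Then the system admits a Turing instability if and only if it does not admit a Turing–Hopf instability and there exists y' > 0 such that det J(y') > 0. -/

import Mathlib

open Matrix Polynomial

/-- The multiset of complex eigenvalues of a real 3×3 matrix, i.e. the roots of its
characteristic polynomial regarded as a polynomial over `ℂ`. -/
noncomputable def eigs (M : Matrix (Fin 3) (Fin 3) ℝ) : Multiset ℂ :=
  (M.charpoly.map (algebraMap ℝ ℂ)).roots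

/-- `Jmat J d₁ d₂ d₃ y = J - y • diag(d₁, d₂, d₃)`. -/
noncomputable def Jmat (J : Matrix (Fin 3) (Fin 3) ℝ) (d₁ d₂ d₃ y : ℝ) :
    Matrix (Fin 3) (Fin 3) ℝ :=
  J - y • Matrix.diagonal ![d₁, d₂, d₃]

/-!
Write the characteristic polynomial of a real 3×3 matrix as `λ³ - tr λ² + m λ - det`, where `m`
is the sum of the principal 2×2 minors. Stability of `J` gives `tr J < 0`, `m J > 0`,
`det J < 0`; along `J(y)` the trace stays negative, `m(y)` is a quadratic in `y` with leading
coefficient `d₁d₂ + d₁d₃ + d₂d₃ > 0` and `det J(y)` a cubic with leading coefficient `-d₁d₂d₃`.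

A positive determinant forces an eigenvalue with positive real part. Conversely, suppose every
unstable eigenvalue is real, some `J(y₀)` is unstable, and `det J(y) ≤ 0` for all `y > 0`. A real
positive eigenvalue together with `tr < 0` and `det ≤ 0` forces `m < 0`, so `m(y)` vanishes at
some `0 < r₁ < y₀ < r₂`. At the `rᵢ` no eigenvalue can be unstable, and the necessary stability
condition `tr · m ≤ det` gives `det J(rᵢ) = 0`. A cubic with negative leading coefficient,
negative at `0` and vanishing at `0 < r₁ < r₂` is positive on `(r₁, r₂)`, so `det J(y₀) > 0`.
-/

open Filter Set

theorem Real.exists_isRoot_of_odd_natDegree {p : ℝ[X]} (hp : Odd p.natDegree) :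
    ∃ x, p.IsRoot x := by
  wlog hlc : 0 ≤ p.leadingCoeff generalizing p
  · obtain ⟨x, hx⟩ := this (p := -p) (by rwa [natDegree_neg]) (by rw [leadingCoeff_neg]; linarith)
    exact ⟨x, by simpa using hx⟩
  have hdeg : 0 < p.degree := natDegree_pos_iff_degree_pos.mp hp.pos
  have hbot : Tendsto (fun x => p.eval x) atBot atBot := by
    have hq : Tendsto (fun x => (p.comp (-X)).eval x) atTop atBot := by
      refine tendsto_atBot_of_leadingCoeff_nonpos _ ?_ ?_
      · rw [← natDegree_pos_iff_degree_pos, natDegree_comp]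
        simpa using hp.pos
      · rw [leadingCoeff_comp (by simp)]
        simp [hp.neg_one_pow, hlc]
    simpa [Function.comp_def] using hq.comp tendsto_neg_atBot_atTop
  exact p.continuous.surjective (p.tendsto_atTop_of_leadingCoeff_nonneg hdeg hlc) hbot 0

namespace Matrix

variable {R : Type*} [CommRing R]

def principalMinorSum (M : Matrix (Fin 3) (Fin 3) R) : R :=
  M 0 0 * M 1 1 - M 0 1 * M 1 0 + M 0 0 * M 2 2 - M 0 2 * M 2 0 + M 1 1 * M 2 2 - M 1 2 * M 2 1

theorem charpoly_fin_three (M : Matrix (Fin 3) (Fin 3) R) :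
    M.charpoly = X ^ 3 - C M.trace * X ^ 2 + C M.principalMinorSum * X - C M.det := by
  rw [charpoly, det_fin_three, det_fin_three, trace_fin_three, principalMinorSum]
  simp
  ring

end Matrix

theorem eval_charpoly_map_complex (M : Matrix (Fin 3) (Fin 3) ℝ) (w : ℂ) :
    (M.charpoly.map (algebraMap ℝ ℂ)).eval w =
      w ^ 3 - M.trace * w ^ 2 + M.principalMinorSum * w - M.det := by
  simp [charpoly_fin_three]

theorem card_eigs (M : Matrix (Fin 3) (Fin 3) ℝ) : (eigs M).card = 3 := by
  rw [eigs, splits_iff_card_roots.mp (IsAlgClosed.splits _),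
    M.charpoly_monic.natDegree_map, charpoly_natDegree_eq_dim, Fintype.card_fin]

theorem vieta_of_eigs_eq {M : Matrix (Fin 3) (Fin 3) ℝ} {z₁ z₂ z₃ : ℂ}
    (h : eigs M = {z₁, z₂, z₃}) :
    (M.trace : ℂ) = z₁ + z₂ + z₃ ∧
      (M.principalMinorSum : ℂ) = z₁ * z₂ + z₁ * z₃ + z₂ * z₃ ∧
      (M.det : ℂ) = z₁ * z₂ * z₃ := by
  have hfactor :
      M.charpoly.map (algebraMap ℝ ℂ) = (X - C z₁) * ((X - C z₂) * (X - C z₃)) := by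
    rw [(IsAlgClosed.splits _).eq_prod_roots_of_monic (M.charpoly_monic.map _),
      show (M.charpoly.map (algebraMap ℝ ℂ)).roots = eigs M from rfl, h]
    simp
  have heval (w : ℂ) : w ^ 3 - M.trace * w ^ 2 + M.principalMinorSum * w - M.det =
      (w - z₁) * ((w - z₂) * (w - z₃)) := by
    rw [← eval_charpoly_map_complex, hfactor]
    simp
  have h₀ := heval 0
  have h₁ := heval 1
  have h₂ := heval (-1)
  refine ⟨?_, ?_, ?_⟩
  · linear_combination (-1 / 2 : ℂ) * h₁ + (-1 / 2 : ℂ) * h₂ + h₀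
  · linear_combination (1 / 2 : ℂ) * h₁ - (1 / 2 : ℂ) * h₂
  · linear_combination -h₀

theorem exists_eigs_eq_insert_ofReal (M : Matrix (Fin 3) (Fin 3) ℝ) :
    ∃ (r : ℝ) (u v : ℂ), eigs M = {(r : ℂ), u, v} ∧ M.trace = r + (u.re + v.re) ∧
      M.principalMinorSum = r * (u.re + v.re) + (u.re * v.re + u.im ^ 2) ∧
      M.det = r * (u.re * v.re + u.im ^ 2) := by
  obtain ⟨r, hr⟩ := Real.exists_isRoot_of_odd_natDegree (p := M.charpoly)
    (by rw [charpoly_natDegree_eq_dim]; decide)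
  have hmem : (r : ℂ) ∈ eigs M := by
    rw [eigs, mem_roots (M.charpoly_monic.map _).ne_zero, IsRoot, eval_map,
      show (r : ℂ) = algebraMap ℝ ℂ r from rfl, eval₂_at_apply, hr.eq_zero, map_zero]
  obtain ⟨t, ht⟩ := Multiset.exists_cons_of_mem hmem
  obtain ⟨u, v, rfl⟩ := Multiset.card_eq_two.mp (show t.card = 2 by
    have := card_eigs M
    rw [ht, Multiset.card_cons] at this
    omega)
  obtain ⟨htr, hm, hdet⟩ := vieta_of_eigs_eq ht
  -- `u + v = tr - r` is real, so `(u * v).re = u.re * v.re + u.im ^ 2`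
  have him : v.im = -u.im := by
    have := congrArg Complex.im htr
    simp at this
    linarith
  refine ⟨r, u, v, ht, ?_, ?_, ?_⟩
  · have := congrArg Complex.re htr
    simp at this
    linear_combination this
  · have := congrArg Complex.re hm
    simp [him] at this
    linear_combination this
  · have := congrArg Complex.re hdet
    simp [him] at this
    linear_combination this

theorem signs_of_forall_eigs_re_neg {M : Matrix (Fin 3) (Fin 3) ℝ}
    (h : ∀ z ∈ eigs M, z.re < 0) :
    M.trace < 0 ∧ 0 < M.principalMinorSum ∧ M.det < 0 := by
  obtain ⟨r, u, v, hM, htr, hm, hdet⟩ := exists_eigs_eq_insert_ofReal M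
  have hr : r < 0 := by simpa using h r (by simp [hM])
  have hu : u.re < 0 := h u (by simp [hM])
  have hv : v.re < 0 := h v (by simp [hM])
  have ht : 0 < u.re * v.re + u.im ^ 2 := by nlinarith [mul_pos_of_neg_of_neg hu hv]
  refine ⟨by linarith, ?_, by rw [hdet]; exact mul_neg_of_neg_of_pos hr ht⟩
  nlinarith [mul_pos_of_neg_of_neg hr (add_neg hu hv)]

theorem signs_of_forall_eigs_re_nonpos {M : Matrix (Fin 3) (Fin 3) ℝ}
    (h : ∀ z ∈ eigs M, z.re ≤ 0) :
    M.det ≤ 0 ∧ M.trace * M.principalMinorSum ≤ M.det := by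
  obtain ⟨r, u, v, hM, htr, hm, hdet⟩ := exists_eigs_eq_insert_ofReal M
  have hr : r ≤ 0 := by simpa using h r (by simp [hM])
  have hu : u.re ≤ 0 := h u (by simp [hM])
  have hv : v.re ≤ 0 := h v (by simp [hM])
  have hs : u.re + v.re ≤ 0 := by linarith
  have ht : 0 ≤ u.re * v.re + u.im ^ 2 := by nlinarith [mul_nonneg_of_nonpos_of_nonpos hu hv]
  refine ⟨by rw [hdet]; exact mul_nonpos_of_nonpos_of_nonneg hr ht, ?_⟩
  -- with `s = u.re + v.re` and `t = u.re * v.re + u.im ^ 2`: `tr * m - det = s * (r² + r s + t)`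
  have hq : 0 ≤ r ^ 2 + r * (u.re + v.re) + (u.re * v.re + u.im ^ 2) := by
    nlinarith [mul_nonneg_of_nonpos_of_nonpos hr hs]
  rw [htr, hm, hdet]
  nlinarith [mul_nonpos_of_nonpos_of_nonneg hs hq]

theorem principalMinorSum_neg_of_real_eig_pos {M : Matrix (Fin 3) (Fin 3) ℝ} {z : ℂ}
    (hz : z ∈ eigs M) (him : z.im = 0) (hre : 0 < z.re) (htr : M.trace < 0)
    (hdet : M.det ≤ 0) : M.principalMinorSum < 0 := by
  obtain ⟨x, rfl⟩ : ∃ x : ℝ, z = x := ⟨z.re, Complex.ext rfl (by simp [him])⟩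
  rw [Complex.ofReal_re] at hre
  have hroot := (mem_roots (M.charpoly_monic.map (algebraMap ℝ ℂ)).ne_zero).mp hz
  rw [IsRoot, eval_charpoly_map_complex] at hroot
  have hx : x ^ 3 - M.trace * x ^ 2 + M.principalMinorSum * x - M.det = 0 := by
    exact_mod_cast hroot
  nlinarith [mul_pos hre hre]

theorem exists_re_pos_of_det_pos {M : Matrix (Fin 3) (Fin 3) ℝ} (hdet : 0 < M.det) :
    ∃ z ∈ eigs M, 0 < z.re := by
  by_contra! hall
  exact (signs_of_forall_eigs_re_nonpos hall).1.not_gt hdet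

theorem det_eq_zero_of_principalMinorSum_eq_zero {M : Matrix (Fin 3) (Fin 3) ℝ}
    (hm : M.principalMinorSum = 0) (hreal : ∀ z ∈ eigs M, 0 < z.re → z.im = 0)
    (htr : M.trace < 0) (hdet : M.det ≤ 0) : M.det = 0 := by
  refine hdet.antisymm ?_
  by_contra! hneg
  obtain ⟨z, hz, hre⟩ : ∃ z ∈ eigs M, 0 < z.re := by
    by_contra! hall
    have := (signs_of_forall_eigs_re_nonpos hall).2
    rw [hm, mul_zero] at this
    exact hneg.not_ge this
  exact (principalMinorSum_neg_of_real_eig_pos hz (hreal z hz hre) hre htr hdet).ne hm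

theorem trace_Jmat (J : Matrix (Fin 3) (Fin 3) ℝ) (d₁ d₂ d₃ y : ℝ) :
    (Jmat J d₁ d₂ d₃ y).trace = J.trace - (d₁ + d₂ + d₃) * y := by
  simp [Jmat, Fin.sum_univ_three]
  ring

theorem exists_principalMinorSum_Jmat (J : Matrix (Fin 3) (Fin 3) ℝ) (d₁ d₂ d₃ : ℝ) :
    ∃ β, ∀ y, (Jmat J d₁ d₂ d₃ y).principalMinorSum =
      (d₁ * d₂ + d₁ * d₃ + d₂ * d₃) * y ^ 2 + β * y + J.principalMinorSum :=
  ⟨-(d₁ * (J 1 1 + J 2 2) + d₂ * (J 0 0 + J 2 2) + d₃ * (J 0 0 + J 1 1)), fun y => by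
    simp [Jmat, principalMinorSum]
    ring⟩

theorem exists_det_Jmat (J : Matrix (Fin 3) (Fin 3) ℝ) (d₁ d₂ d₃ : ℝ) :
    ∃ γ₂ γ₁, ∀ y,
      (Jmat J d₁ d₂ d₃ y).det = -(d₁ * d₂ * d₃) * y ^ 3 + γ₂ * y ^ 2 + γ₁ * y + J.det :=
  ⟨d₁ * d₂ * J 2 2 + d₁ * d₃ * J 1 1 + d₂ * d₃ * J 0 0,
    -(d₁ * (J 1 1 * J 2 2 - J 1 2 * J 2 1) + d₂ * (J 0 0 * J 2 2 - J 0 2 * J 2 0)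
      + d₃ * (J 0 0 * J 1 1 - J 0 1 * J 1 0)), fun y => by
    simp [Jmat, det_fin_three]
    ring⟩

theorem exists_zeros_of_quadratic_neg {α β γ s : ℝ} (hα : 0 < α) (hγ : 0 < γ) (hs : 0 < s)
    (hneg : α * s ^ 2 + β * s + γ < 0) :
    ∃ r₁ r₂, 0 < r₁ ∧ r₁ < s ∧ s < r₂ ∧
      α * r₁ ^ 2 + β * r₁ + γ = 0 ∧ α * r₂ ^ 2 + β * r₂ + γ = 0 := by
  have hcont : ContinuousOn (fun y => α * y ^ 2 + β * y + γ) (Icc 0 s) := by fun_prop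
  obtain ⟨r₁, ⟨hr₁, hr₁s⟩, h₁⟩ :=
    intermediate_value_Ioo' hs.le hcont (show (0 : ℝ) ∈ Ioo _ _ by simp [hneg, hγ])
  -- the second zero is given by Vieta's formula for the sum of the roots
  have hfactor (y : ℝ) : α * y ^ 2 + β * y + γ = α * (y - r₁) * (y - (-β / α - r₁)) := by
    have hβ : α * (β / α) = β := mul_div_cancel₀ β hα.ne'
    linear_combination h₁ - (y - r₁) * hβ
  refine ⟨r₁, -β / α - r₁, hr₁, hr₁s, ?_, h₁, by rw [hfactor]; ring⟩
  rw [hfactor] at hneg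
  nlinarith [mul_pos hα (sub_pos.mpr hr₁s)]

theorem cubic_pos_of_mem_Ioo {κ e₂ e₁ e₀ r₁ r₂ y : ℝ} (hκ : κ < 0) (he₀ : e₀ < 0)
    (hr₁ : 0 < r₁) (h₁ : κ * r₁ ^ 3 + e₂ * r₁ ^ 2 + e₁ * r₁ + e₀ = 0)
    (h₂ : κ * r₂ ^ 3 + e₂ * r₂ ^ 2 + e₁ * r₂ + e₀ = 0) (hy : y ∈ Ioo r₁ r₂) :
    0 < κ * y ^ 3 + e₂ * y ^ 2 + e₁ * y + e₀ := by
  obtain ⟨hy₁, hy₂⟩ := hy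
  set m := e₂ + κ * (r₁ + r₂)
  have hfactor (x : ℝ) :
      κ * x ^ 3 + e₂ * x ^ 2 + e₁ * x + e₀ = (x - r₁) * (x - r₂) * (κ * x + m) := by
    apply mul_left_cancel₀ (sub_ne_zero.mpr (hy₁.trans hy₂).ne')
    linear_combination (r₂ - x) * h₁ + (x - r₁) * h₂
  have hm : m < 0 := by
    have h₀ := hfactor 0
    nlinarith [mul_pos hr₁ (hr₁.trans (hy₁.trans hy₂))]
  rw [hfactor]
  exact mul_pos_of_neg_of_neg (mul_neg_of_pos_of_neg (by linarith) (by linarith)) (by nlinarith)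

theorem exists_det_Jmat_pos {J : Matrix (Fin 3) (Fin 3) ℝ} {d₁ d₂ d₃ : ℝ}
    (hd₁ : 0 < d₁) (hd₂ : 0 < d₂) (hd₃ : 0 < d₃) (hJ : ∀ z ∈ eigs J, z.re < 0)
    (hunstable : ∃ y > (0 : ℝ), ∃ z ∈ eigs (Jmat J d₁ d₂ d₃ y), 0 < z.re)
    (hreal : ∀ y > (0 : ℝ), ∀ z ∈ eigs (Jmat J d₁ d₂ d₃ y), 0 < z.re → z.im = 0) :
    ∃ y > (0 : ℝ), 0 < (Jmat J d₁ d₂ d₃ y).det := by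
  obtain ⟨htr₀, hm₀, hdet₀⟩ := signs_of_forall_eigs_re_neg hJ
  obtain ⟨ys, hys, z, hz, hzre⟩ := hunstable
  by_contra! hdet
  have htr (y : ℝ) (hy : 0 < y) : (Jmat J d₁ d₂ d₃ y).trace < 0 := by
    rw [trace_Jmat]
    nlinarith
  obtain ⟨β, hβ⟩ := exists_principalMinorSum_Jmat J d₁ d₂ d₃
  obtain ⟨γ₂, γ₁, hγ⟩ := exists_det_Jmat J d₁ d₂ d₃
  have hm_ys := hβ ys ▸ principalMinorSum_neg_of_real_eig_pos hz (hreal ys hys z hz hzre) hzre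
    (htr ys hys) (hdet ys hys)
  obtain ⟨r₁, r₂, hr₁, hr₁s, hr₂s, h₁, h₂⟩ :=
    exists_zeros_of_quadratic_neg (by positivity) hm₀ hys hm_ys
  have hzero (y : ℝ) (hy : 0 < y)
      (hm : (d₁ * d₂ + d₁ * d₃ + d₂ * d₃) * y ^ 2 + β * y + J.principalMinorSum = 0) :
      -(d₁ * d₂ * d₃) * y ^ 3 + γ₂ * y ^ 2 + γ₁ * y + J.det = 0 :=
    hγ y ▸ det_eq_zero_of_principalMinorSum_eq_zero (hβ y ▸ hm) (hreal y hy) (htr y hy) (hdet y hy)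
  have hpos := cubic_pos_of_mem_Ioo (neg_neg_of_pos (by positivity)) hdet₀ hr₁ (hzero r₁ hr₁ h₁)
    (hzero r₂ (hr₁.trans (hr₁s.trans hr₂s)) h₂) ⟨hr₁s, hr₂s⟩
  exact (hdet ys hys).not_gt (hγ ys ▸ hpos)

theorem turing_iff_not_turingHopf_and_positive_det
    (J : Matrix (Fin 3) (Fin 3) ℝ) (d₁ d₂ d₃ : ℝ)
    (hd₁ : 0 < d₁) (hd₂ : 0 < d₂) (hd₃ : 0 < d₃)
    (hJ : ∀ z ∈ eigs J, z.re < 0) :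
    ((∃ y > (0 : ℝ), ∃ z ∈ eigs (Jmat J d₁ d₂ d₃ y), 0 < z.re) ∧
        (∀ y > (0 : ℝ), ∀ z ∈ eigs (Jmat J d₁ d₂ d₃ y), 0 < z.re → z.im = 0)) ↔
      (¬(∃ y > (0 : ℝ), ∃ z ∈ eigs (Jmat J d₁ d₂ d₃ y), z.im ≠ 0 ∧ 0 < z.re) ∧
        ∃ y' > (0 : ℝ), 0 < (Jmat J d₁ d₂ d₃ y').det) := by
  constructor
  · rintro ⟨hunstable, hreal⟩
    exact ⟨fun ⟨y, hy, z, hz, him, hre⟩ => him (hreal y hy z hz hre),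
      exists_det_Jmat_pos hd₁ hd₂ hd₃ hJ hunstable hreal⟩
  · rintro ⟨hnoTH, y, hy, hdet⟩
    obtain ⟨z, hz, hre⟩ := exists_re_pos_of_det_pos hdet
    refine ⟨⟨y, hy, z, hz, hre⟩, fun y hy z hz hre => ?_⟩
    by_contra him
    exact hnoTH ⟨y, hy, z, hz, him, hre⟩
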